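/- Let n ≥ 4 and let S = {1, 2, …, k} ∪ {n-1} for some k with 1 ≤ k ≤ n-3. Then there exist permutations σ, ρ ∈ D(S;n) with d_H(σ,ρ) = n, i.e., σ and ρ differ at every index. -/

import Mathlib

/-- `σ` is a permutation of `[n] = {1,…,n}`, written in one-line notation:
`σ j` is the `j`-th entry, for `1 ≤ j ≤ n`. -/
def IsPermOn (n : ℕ) (σ : ℕ → ℕ) : Prop :=
  Set.BijOn σ (Set.Icc 1 n) (Set.Icc 1 n)

/-- The descent set `D(σ) = {i ∈ [n-1] | σ_i > σ_{i+1}}`. -/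
def DescentSet (n : ℕ) (σ : ℕ → ℕ) : Finset ℕ :=
  (Finset.Icc 1 (n - 1)).filter fun i => σ (i + 1) < σ i

/-- `D(S;n)`, the set of permutations of `[n]` with descent set `S`. -/
def DSn (n : ℕ) (S : Finset ℕ) : Set (ℕ → ℕ) :=
  {σ | IsPermOn n σ ∧ DescentSet n σ = S}

/-- The Hamming distance `d_H(σ,ρ) = |{i ∈ [n] : σ_i ≠ ρ_i}|`. -/
def dHamming (n : ℕ) (σ ρ : ℕ → ℕ) : ℕ :=
  ((Finset.Icc 1 n).filter fun i => σ i ≠ ρ i).card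

/-- The `ℓ∞` distance `d_ℓ(σ,ρ) = max_{1 ≤ i ≤ n} |σ_i − ρ_i|`. -/
def dLinf (n : ℕ) (σ ρ : ℕ → ℕ) : ℕ :=
  (Finset.Icc 1 n).sup fun i => ((σ i : ℤ) - (ρ i : ℤ)).natAbs

/-- `σ` and `ρ` are distinct as permutations of `[n]`
(they differ at some index of `[n]`). -/
def DistinctOn (n : ℕ) (σ ρ : ℕ → ℕ) : Prop :=
  ∃ i ∈ Set.Icc 1 n, σ i ≠ ρ i


/-!
Both witnesses consist of a decreasing run of length `k + 1`, an increasing run, and one final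
descent. They disagree everywhere because in the first block and in the middle block the entries
of `ρ` are those of `σ` shifted down by one and by two respectively, while `ρ₁ = n > k + 2 = σ₁`
and the last two entries are `n, 1` against `n - 1, n - 2`.
-/

lemma isPermOn_of_mapsTo_of_injOn {n : ℕ} {σ : ℕ → ℕ}
    (hmaps : Set.MapsTo σ (Set.Icc 1 n) (Set.Icc 1 n)) (hinj : Set.InjOn σ (Set.Icc 1 n)) :
    IsPermOn n σ :=
  ((Set.finite_Icc 1 n).injOn_iff_bijOn_of_mapsTo hmaps).1 hinj

lemma dHamming_eq_self_of_forall_ne {n : ℕ} {σ ρ : ℕ → ℕ}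
    (h : ∀ i ∈ Finset.Icc 1 n, σ i ≠ ρ i) : dHamming n σ ρ = n := by
  rw [dHamming, Finset.filter_true_of_mem h, Nat.card_Icc, Nat.add_sub_cancel]

/-- `σ = (k+2, k+1, …, 2, k+3, k+4, …, n, 1)`. -/
def sigmaWitness (n k : ℕ) : ℕ → ℕ := fun i =>
  if i ≤ k + 1 then k + 3 - i else if i ≤ n - 2 then i + 1 else if i = n - 1 then n else 1

/-- `ρ = (n, k, k-1, …, 1, k+1, …, n-3, n-1, n-2)`. -/
def rhoWitness (n k : ℕ) : ℕ → ℕ := fun i =>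
  if i = 1 then n else if i ≤ k + 1 then k + 2 - i else if i ≤ n - 2 then i - 1
  else if i = n - 1 then n - 1 else n - 2

section Witnesses

variable {n k : ℕ}

lemma isPermOn_sigmaWitness (hk : k + 3 ≤ n) : IsPermOn n (sigmaWitness n k) := by
  apply isPermOn_of_mapsTo_of_injOn
  · intro i hi
    simp only [Set.mem_Icc, sigmaWitness] at hi ⊢
    split_ifs <;> omega
  · intro a ha b hb h
    simp only [Set.mem_Icc] at ha hb
    simp only [sigmaWitness] at h
    split_ifs at h <;> omega

lemma isPermOn_rhoWitness (hk : k + 3 ≤ n) : IsPermOn n (rhoWitness n k) := by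
  apply isPermOn_of_mapsTo_of_injOn
  · intro i hi
    simp only [Set.mem_Icc, rhoWitness] at hi ⊢
    split_ifs <;> omega
  · intro a ha b hb h
    simp only [Set.mem_Icc] at ha hb
    simp only [rhoWitness] at h
    split_ifs at h <;> omega

lemma descentSet_sigmaWitness (hk : k + 3 ≤ n) :
    DescentSet n (sigmaWitness n k) = Finset.Icc 1 k ∪ {n - 1} := by
  ext i
  simp only [DescentSet, Finset.mem_filter, Finset.mem_Icc, Finset.mem_union,
    Finset.mem_singleton]
  simp only [sigmaWitness]
  split_ifs <;> omega

lemma descentSet_rhoWitness (hk1 : 1 ≤ k) (hk : k + 3 ≤ n) :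
    DescentSet n (rhoWitness n k) = Finset.Icc 1 k ∪ {n - 1} := by
  ext i
  simp only [DescentSet, Finset.mem_filter, Finset.mem_Icc, Finset.mem_union,
    Finset.mem_singleton]
  simp only [rhoWitness]
  split_ifs <;> omega

lemma sigmaWitness_ne_rhoWitness (hk1 : 1 ≤ k) (hk : k + 3 ≤ n) {i : ℕ}
    (hi : i ∈ Finset.Icc 1 n) : sigmaWitness n k i ≠ rhoWitness n k i := by
  simp only [Finset.mem_Icc] at hi
  simp only [sigmaWitness, rhoWitness]
  split_ifs <;> omega

end Witnesses

theorem stmt5_general (n k : ℕ) (hk1 : 1 ≤ k) (hk2 : k ≤ n - 3) :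
    ∃ σ ∈ DSn n (Finset.Icc 1 k ∪ {n - 1}), ∃ ρ ∈ DSn n (Finset.Icc 1 k ∪ {n - 1}),
      dHamming n σ ρ = n := by
  have hk : k + 3 ≤ n := by omega
  exact ⟨sigmaWitness n k, ⟨isPermOn_sigmaWitness hk, descentSet_sigmaWitness hk⟩,
    rhoWitness n k, ⟨isPermOn_rhoWitness hk, descentSet_rhoWitness hk1 hk⟩,
    dHamming_eq_self_of_forall_ne fun _ hi => sigmaWitness_ne_rhoWitness hk1 hk hi⟩

/-- For `S = {1,…,k} ∪ {n-1}` with `1 ≤ k ≤ n-3`, there exist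
`σ, ρ ∈ D(S;n)` with `d_H(σ,ρ) = n`, i.e. differing at every index. -/
theorem stmt5 (n k : ℕ) (hn : 4 ≤ n) (hk1 : 1 ≤ k) (hk2 : k ≤ n - 3) :
    ∃ σ ∈ DSn n (Finset.Icc 1 k ∪ {n - 1}), ∃ ρ ∈ DSn n (Finset.Icc 1 k ∪ {n - 1}),
      dHamming n σ ρ = n :=
  stmt5_general n k hk1 hk2
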